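/- arXiv:2509.26156 — 2 statements merged into one kernel-verified Lean document; each statement's English description precedes it below -/
import Mathlib

section
/- Boundedness and the rotation set: Let f̃, g̃ ∈ Homeo(ℝ²,ℤ²), let (m_n) be a sequence of positive integers with m_n/n → λ > 0, and suppose there is D such that for each n there is an integer vector v_n with ‖f̃ⁿ(x) − g̃^{m_n}(x) − v_n‖ ≤ D for all x ∈ ℝ². Then λ·Rot(g̃) is a translate of Rot(f̃). -/
open Filter Pointwise Topology

/-- `f` commutes with the integer translations of the plane. -/
def CommutesWithIntTranslations (f : ℝ × ℝ → ℝ × ℝ) : Prop :=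
  ∀ (x : ℝ × ℝ) (p q : ℤ), f (x + ((p : ℝ), (q : ℝ))) = f x + ((p : ℝ), (q : ℝ))

/-- The Misiurewicz–Ziemian rotation set of a lift `f`. -/
def RotSet (f : ℝ × ℝ → ℝ × ℝ) : Set (ℝ × ℝ) :=
  {v | ∃ (x : ℕ → ℝ × ℝ) (nk : ℕ → ℕ), Tendsto nk atTop atTop ∧
    Tendsto (fun k => ((nk k : ℝ))⁻¹ • (f^[nk k] (x k) - x k)) atTop (nhds v)}

private lemma exists_disp_bound (F : ℝ × ℝ → ℝ × ℝ) (hc : Continuous F)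
    (hF : CommutesWithIntTranslations F) :
    ∃ M : ℝ, 0 ≤ M ∧ ∀ x, ‖F x - x‖ ≤ M := by
  have hK : IsCompact (Set.Icc ((0 : ℝ × ℝ)) (1, 1)) := isCompact_Icc
  have hne : (Set.Icc ((0 : ℝ × ℝ)) (1, 1)).Nonempty := by
    refine ⟨0, Set.left_mem_Icc.2 ?_⟩
    rw [Prod.le_def]
    constructor <;> norm_num
  obtain ⟨z, hzK, hmax⟩ := hK.exists_isMaxOn hne ((hc.sub continuous_id).norm.continuousOn)
  refine ⟨‖F z - z‖, norm_nonneg _, fun x => ?_⟩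
  set y : ℝ × ℝ := x - ((⌊x.1⌋ : ℝ), (⌊x.2⌋ : ℝ)) with hy
  have hyK : y ∈ Set.Icc ((0 : ℝ × ℝ)) (1, 1) := by
    rw [Set.mem_Icc, Prod.le_def, Prod.le_def]
    have h1 := Int.floor_le x.1
    have h2 := Int.floor_le x.2
    have h3 := Int.lt_floor_add_one x.1
    have h4 := Int.lt_floor_add_one x.2
    refine ⟨⟨?_, ?_⟩, ?_, ?_⟩
    · show (0:ℝ) ≤ x.1 - (⌊x.1⌋:ℝ); linarith
    · show (0:ℝ) ≤ x.2 - (⌊x.2⌋:ℝ); linarith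
    · show x.1 - (⌊x.1⌋:ℝ) ≤ (1:ℝ); linarith
    · show x.2 - (⌊x.2⌋:ℝ) ≤ (1:ℝ); linarith
  have hxy : x = y + ((⌊x.1⌋ : ℝ), (⌊x.2⌋ : ℝ)) := by rw [hy]; abel
  have hdisp : F x - x = F y - y := by
    rw [hxy, hF y ⌊x.1⌋ ⌊x.2⌋]; abel
  rw [hdisp]
  exact hmax hyK

private lemma iterate_disp_bound {F : ℝ × ℝ → ℝ × ℝ} {M : ℝ} (hM : ∀ x, ‖F x - x‖ ≤ M) :
    ∀ (n : ℕ) (x : ℝ × ℝ), ‖F^[n] x - x‖ ≤ n * M := by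
  intro n
  induction n with
  | zero => intro x; simp
  | succ n ih =>
    intro x
    have hsplit : F^[n + 1] x - x = (F (F^[n] x) - F^[n] x) + (F^[n] x - x) := by
      rw [Function.iterate_succ_apply']; abel
    calc ‖F^[n + 1] x - x‖ ≤ ‖F (F^[n] x) - F^[n] x‖ + ‖F^[n] x - x‖ := by
          rw [hsplit]; exact norm_add_le _ _
    _ ≤ M + n * M := add_le_add (hM _) (ih x)
    _ = ((n + 1 : ℕ) : ℝ) * M := by push_cast; ring

private lemma iterate_gap_bound {F : ℝ × ℝ → ℝ × ℝ} {M : ℝ} (hM : ∀ x, ‖F x - x‖ ≤ M)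
    (a b : ℕ) (x : ℝ × ℝ) : ‖F^[b] x - F^[a] x‖ ≤ |(b : ℝ) - (a : ℝ)| * M := by
  have key : ∀ a b : ℕ, a ≤ b → ∀ x : ℝ × ℝ, ‖F^[b] x - F^[a] x‖ ≤ ((b : ℝ) - a) * M := by
    intro a b hab x
    have hb : F^[b] x = F^[b - a] (F^[a] x) := by
      rw [← Function.iterate_add_apply, Nat.sub_add_cancel hab]
    have h2 := iterate_disp_bound hM (b - a) (F^[a] x)
    rw [hb]
    calc ‖F^[b - a] (F^[a] x) - F^[a] x‖ ≤ ((b - a : ℕ) : ℝ) * M := h2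
    _ = ((b : ℝ) - a) * M := by rw [Nat.cast_sub hab]
  rcases le_total a b with hab | hab
  · rw [abs_of_nonneg (sub_nonneg.2 (by exact_mod_cast hab))]
    exact key a b hab x
  · rw [abs_sub_comm, abs_of_nonneg (sub_nonneg.2 (by exact_mod_cast hab)), norm_sub_rev]
    exact key b a hab x

noncomputable def aSeq (F : ℝ × ℝ → ℝ × ℝ) (φ : ℝ × ℝ →ₗ[ℝ] ℝ) (n : ℕ) : ℝ :=
  sSup (Set.range fun x => φ (F^[n] x - x))

private lemma aSeq_bddAbove {F : ℝ × ℝ → ℝ × ℝ} (φ : ℝ × ℝ →ₗ[ℝ] ℝ) {M : ℝ}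
    (hφ : ∀ z, |φ z| ≤ ‖z‖) (hM : ∀ x, ‖F x - x‖ ≤ M) (n : ℕ) :
    BddAbove (Set.range fun x => φ (F^[n] x - x)) := by
  refine ⟨n * M, ?_⟩
  rintro _ ⟨x, rfl⟩
  exact le_trans (le_abs_self _) (le_trans (hφ _) (iterate_disp_bound hM n x))

private lemma le_aSeq {F : ℝ × ℝ → ℝ × ℝ} (φ : ℝ × ℝ →ₗ[ℝ] ℝ) {M : ℝ}
    (hφ : ∀ z, |φ z| ≤ ‖z‖) (hM : ∀ x, ‖F x - x‖ ≤ M) (n : ℕ) (x : ℝ × ℝ) :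
    φ (F^[n] x - x) ≤ aSeq F φ n :=
  le_csSup (aSeq_bddAbove φ hφ hM n) ⟨x, rfl⟩

private lemma aSeq_le {F : ℝ × ℝ → ℝ × ℝ} (φ : ℝ × ℝ →ₗ[ℝ] ℝ) {n : ℕ} {c : ℝ}
    (h : ∀ x, φ (F^[n] x - x) ≤ c) : aSeq F φ n ≤ c :=
  csSup_le (Set.range_nonempty _) (by rintro _ ⟨x, rfl⟩; exact h x)

private lemma aSeq_subadditive {F : ℝ × ℝ → ℝ × ℝ} (φ : ℝ × ℝ →ₗ[ℝ] ℝ) {M : ℝ}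
    (hφ : ∀ z, |φ z| ≤ ‖z‖) (hM : ∀ x, ‖F x - x‖ ≤ M) :
    Subadditive (aSeq F φ) := by
  intro p q
  apply aSeq_le φ
  intro x
  have hsplit : F^[p + q] x - x = (F^[p] (F^[q] x) - F^[q] x) + (F^[q] x - x) := by
    rw [Function.iterate_add_apply]; abel
  rw [hsplit, map_add]
  exact add_le_add (le_aSeq φ hφ hM p (F^[q] x)) (le_aSeq φ hφ hM q x)

private lemma aSeq_tendsto {F : ℝ × ℝ → ℝ × ℝ} (φ : ℝ × ℝ →ₗ[ℝ] ℝ) {M : ℝ}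
    (hφ : ∀ z, |φ z| ≤ ‖z‖) (hM : ∀ x, ‖F x - x‖ ≤ M) (hM0 : 0 ≤ M) :
    ∃ L : ℝ, Tendsto (fun n : ℕ => aSeq F φ n / n) atTop (𝓝 L) := by
  have hsub := aSeq_subadditive φ hφ hM
  have hbdd : BddBelow (Set.range fun n : ℕ => aSeq F φ n / n) := by
    refine ⟨-M, ?_⟩
    rintro _ ⟨n, rfl⟩
    rcases Nat.eq_zero_or_pos n with hn | hn
    · subst hn
      have h0 : aSeq F φ 0 = 0 := by
        simp [aSeq, Set.range_const]
      show -M ≤ aSeq F φ 0 / ((0 : ℕ) : ℝ)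
      rw [h0]
      simp
      linarith
    · have hn0 : (0 : ℝ) < n := by exact_mod_cast hn
      rw [le_div_iff₀ hn0]
      have h1 : -((n : ℝ) * M) ≤ φ (F^[n] 0 - 0) := by
        have h2 : |φ (F^[n] 0 - 0)| ≤ (n : ℝ) * M :=
          le_trans (hφ _) (iterate_disp_bound hM n 0)
        have h3 := neg_abs_le (φ (F^[n] 0 - 0))
        linarith
      have h4 := le_trans h1 (le_aSeq φ hφ hM n 0)
      nlinarith
  exact ⟨hsub.lim, hsub.tendsto_lim hbdd⟩

/-- Boundedness and the rotation set: if `fⁿ` and `g^{m_n}` stay at uniformly bounded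
`C⁰` distance up to integer translations, and `m_n / n → λ > 0`, then `λ • Rot(g)` is
a translate of `Rot(f)`. -/
theorem stmt13 (f g : ℝ × ℝ ≃ₜ ℝ × ℝ)
    (hf : CommutesWithIntTranslations ⇑f) (hg : CommutesWithIntTranslations ⇑g)
    (m : ℕ → ℕ) (lam : ℝ) (hlam : 0 < lam)
    (hm : Tendsto (fun n : ℕ => (m n : ℝ) / n) atTop (nhds lam))
    (D : ℝ)
    (hD : ∀ n : ℕ, ∃ v : ℤ × ℤ, ∀ x : ℝ × ℝ,
      ‖(⇑f)^[n] x - (⇑g)^[m n] x - ((v.1 : ℝ), (v.2 : ℝ))‖ ≤ D) :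
    ∃ w : ℝ × ℝ, lam • RotSet ⇑g = (fun p => p + w) '' RotSet ⇑f := by
  classical
  choose v hv using hD
  set V : ℕ → ℝ × ℝ := fun n => (((v n).1 : ℝ), ((v n).2 : ℝ)) with hVdef
  have hvV : ∀ (n : ℕ) (x : ℝ × ℝ), ‖(⇑f)^[n] x - (⇑g)^[m n] x - V n‖ ≤ D := fun n x => hv n x
  have hD0 : 0 ≤ D := le_trans (norm_nonneg _) (hv 0 0)
  obtain ⟨Mf, hMf0, hMf⟩ := exists_disp_bound (⇑f) f.continuous hf
  obtain ⟨Mg, hMg0, hMg⟩ := exists_disp_bound (⇑g) g.continuous hg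
  -- m tends to infinity
  have hmtop : Tendsto m atTop atTop := by
    rw [← tendsto_natCast_atTop_iff (R := ℝ)]
    have h1 : ∀ᶠ n : ℕ in atTop, lam / 2 ≤ (m n : ℝ) / n :=
      hm.eventually (eventually_ge_nhds (by linarith))
    apply tendsto_atTop_mono' atTop ?_
      ((tendsto_natCast_atTop_atTop (R := ℝ)).const_mul_atTop
        (by linarith : (0:ℝ) < lam / 2))
    filter_upwards [h1, eventually_ge_atTop 1] with n hn hn1
    have hn0 : (0 : ℝ) < n := by exact_mod_cast hn1
    calc lam / 2 * n ≤ (m n : ℝ) / n * n := by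
          exact mul_le_mul_of_nonneg_right hn (le_of_lt hn0)
    _ = m n := by field_simp
  -- limits of φ (V n) / n for coordinate functionals
  have keyφ : ∀ (φ : ℝ × ℝ →ₗ[ℝ] ℝ), (∀ z, |φ z| ≤ ‖z‖) →
      ∃ c : ℝ, Tendsto (fun n : ℕ => φ (V n) / n) atTop (𝓝 c) := by
    intro φ hφ
    obtain ⟨LF, hLF⟩ := aSeq_tendsto (F := ⇑f) φ hφ hMf hMf0
    obtain ⟨LG, hLG⟩ := aSeq_tendsto (F := ⇑g) φ hφ hMg hMg0
    refine ⟨LF - LG * lam, ?_⟩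
    have comp : ∀ n, |aSeq (⇑f) φ n - aSeq (⇑g) φ (m n) - φ (V n)| ≤ D := by
      intro n
      have h1 : aSeq (⇑f) φ n ≤ aSeq (⇑g) φ (m n) + φ (V n) + D := by
        apply aSeq_le φ
        intro x
        have hid : (⇑f)^[n] x - x =
            ((⇑g)^[m n] x - x) + V n + ((⇑f)^[n] x - (⇑g)^[m n] x - V n) := by abel
        rw [hid, map_add, map_add]
        have he : φ ((⇑f)^[n] x - (⇑g)^[m n] x - V n) ≤ D :=
          le_trans (le_abs_self _) (le_trans (hφ _) (hvV n x))
        have h2 := le_aSeq φ hφ hMg (m n) x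
        linarith
      have h2 : aSeq (⇑g) φ (m n) ≤ aSeq (⇑f) φ n - φ (V n) + D := by
        apply aSeq_le φ
        intro x
        have hid : (⇑g)^[m n] x - x =
            ((⇑f)^[n] x - x) - V n - ((⇑f)^[n] x - (⇑g)^[m n] x - V n) := by abel
        rw [hid, map_sub, map_sub]
        have he : -D ≤ φ ((⇑f)^[n] x - (⇑g)^[m n] x - V n) := by
          have h3 := le_trans (hφ _) (hvV n x)
          have h4 := neg_abs_le (φ ((⇑f)^[n] x - (⇑g)^[m n] x - V n))
          linarith
        have h3 := le_aSeq φ hφ hMf n x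
        linarith
      rw [abs_le]
      constructor <;> linarith
    have hmain : Tendsto (fun n : ℕ =>
        aSeq (⇑f) φ n / n - aSeq (⇑g) φ (m n) / (m n) * ((m n : ℝ) / n)) atTop
        (𝓝 (LF - LG * lam)) :=
      hLF.sub ((hLG.comp hmtop).mul hm)
    have hdiff : Tendsto (fun n : ℕ => φ (V n) / n -
        (aSeq (⇑f) φ n / n - aSeq (⇑g) φ (m n) / (m n) * ((m n : ℝ) / n))) atTop (𝓝 0) := by
      apply squeeze_zero_norm' ?_ (tendsto_const_div_atTop_nhds_zero_nat D)
      filter_upwards [eventually_ge_atTop 1, hmtop.eventually (eventually_ge_atTop 1)]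
        with n hn1 hmn1
      have hn0 : (0 : ℝ) < n := by exact_mod_cast hn1
      have hmn0 : (0 : ℝ) < (m n : ℝ) := by exact_mod_cast hmn1
      have hsimp : aSeq (⇑g) φ (m n) / (m n) * ((m n : ℝ) / n) = aSeq (⇑g) φ (m n) / n := by
        field_simp
      rw [hsimp]
      have heq : φ (V n) / n - (aSeq (⇑f) φ n / n - aSeq (⇑g) φ (m n) / n)
          = -(aSeq (⇑f) φ n - aSeq (⇑g) φ (m n) - φ (V n)) / n := by ring
      rw [Real.norm_eq_abs, heq, abs_div, abs_neg, abs_of_pos hn0]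
      exact (div_le_div_iff_of_pos_right hn0).mpr (comp n)
    have hfun : (fun n : ℕ => φ (V n) / n) = fun n : ℕ =>
        (φ (V n) / n - (aSeq (⇑f) φ n / n - aSeq (⇑g) φ (m n) / (m n) * ((m n : ℝ) / n)))
        + (aSeq (⇑f) φ n / n - aSeq (⇑g) φ (m n) / (m n) * ((m n : ℝ) / n)) := by
      funext n; ring
    rw [hfun]
    simpa using hdiff.add hmain
  have hφ1 : ∀ z : ℝ × ℝ, |(LinearMap.fst ℝ ℝ ℝ) z| ≤ ‖z‖ := by
    intro z
    rw [LinearMap.fst_apply, ← Real.norm_eq_abs]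
    exact norm_fst_le z
  have hφ2 : ∀ z : ℝ × ℝ, |(LinearMap.snd ℝ ℝ ℝ) z| ≤ ‖z‖ := by
    intro z
    rw [LinearMap.snd_apply, ← Real.norm_eq_abs]
    exact norm_snd_le z
  obtain ⟨c1, hc1⟩ := keyφ (LinearMap.fst ℝ ℝ ℝ) hφ1
  obtain ⟨c2, hc2⟩ := keyφ (LinearMap.snd ℝ ℝ ℝ) hφ2
  simp only [LinearMap.fst_apply] at hc1
  simp only [LinearMap.snd_apply] at hc2
  set w : ℝ × ℝ := (c1, c2) with hwdef
  have hw : Tendsto (fun n : ℕ => ((n : ℝ))⁻¹ • V n) atTop (𝓝 w) := by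
    have hfun : (fun n : ℕ => ((n : ℝ))⁻¹ • V n)
        = fun n : ℕ => ((V n).1 / n, (V n).2 / n) := by
      funext n
      refine Prod.ext ?_ ?_ <;> simp [Prod.smul_fst, Prod.smul_snd, smul_eq_mul,
        inv_mul_eq_div]
    rw [hfun]
    exact hc1.prodMk_nhds hc2
  refine ⟨-w, Set.Subset.antisymm ?_ ?_⟩
  · -- lam • Rot g ⊆ Rot f + (-w)
    rintro z hz
    rw [Set.mem_smul_set] at hz
    obtain ⟨u, ⟨y, s, hs, hu⟩, rfl⟩ := hz
    set N : ℕ → ℕ := fun k => ⌈(s k : ℝ) / lam⌉₊ with hNdef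
    have hsR : Tendsto (fun k => ((s k : ℕ) : ℝ)) atTop atTop :=
      tendsto_natCast_atTop_atTop.comp hs
    have hNR : Tendsto (fun k => ((N k : ℕ) : ℝ)) atTop atTop := by
      apply tendsto_atTop_mono (fun k => Nat.le_ceil ((s k : ℝ) / lam))
      exact hsR.atTop_div_const hlam
    have hN : Tendsto N atTop atTop := tendsto_natCast_atTop_iff.mp hNR
    have hev : ∀ᶠ k in atTop, 1 ≤ s k ∧ 1 ≤ N k := by
      filter_upwards [hs.eventually (eventually_ge_atTop 1),
        hN.eventually (eventually_ge_atTop 1)] with k h1 h2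
      exact ⟨h1, h2⟩
    -- basic inequalities
    have hb : ∀ k, (s k : ℝ) ≤ lam * N k ∧ lam * (N k : ℝ) ≤ s k + lam := by
      intro k
      constructor
      · have := Nat.le_ceil ((s k : ℝ) / lam)
        rw [div_le_iff₀ hlam] at this
        linarith [this]
      · have h2 : ((N k : ℕ) : ℝ) < (s k : ℝ) / lam + 1 :=
          Nat.ceil_lt_add_one (by positivity)
        have h3 : lam * (N k : ℝ) < lam * ((s k : ℝ) / lam + 1) :=
          (mul_lt_mul_iff_right₀ hlam).2 h2
        have h4 : lam * ((s k : ℝ) / lam + 1) = s k + lam := by field_simp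
        linarith
    -- limit of s k / N k
    have hT1 : Tendsto (fun k => (s k : ℝ) / (N k : ℝ)) atTop (𝓝 lam) := by
      have h0 : Tendsto (fun k => (s k : ℝ) / (N k : ℝ) - lam) atTop (𝓝 0) := by
        apply squeeze_zero_norm' (a := fun k => lam * ((N k : ℝ))⁻¹) ?_ ?_
        · filter_upwards [hev] with k hk
          have hNk0 : (0 : ℝ) < (N k : ℝ) := by exact_mod_cast hk.2
          have h1 := (hb k).1
          have h2 := (hb k).2
          rw [Real.norm_eq_abs]
          have heq : (s k : ℝ) / (N k : ℝ) - lam = ((s k : ℝ) - lam * N k) / N k := by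
            field_simp
          rw [heq, abs_div, abs_of_pos hNk0]
          have h5 : |(s k : ℝ) - lam * N k| ≤ lam := by
            rw [abs_le]; constructor <;> linarith
          calc |(s k : ℝ) - lam * N k| / (N k : ℝ) ≤ lam / (N k : ℝ) := by
                exact (div_le_div_iff_of_pos_right hNk0).mpr h5
          _ = lam * ((N k : ℝ))⁻¹ := by ring
        · have := hNR.inv_tendsto_atTop
          simpa using this.const_mul lam
      have := h0.add_const lam
      simpa using this
    refine ⟨lam • u + w, ⟨y, N, hN, ?_⟩, by module⟩
    -- decomposition
    have hdecomp : ∀ᶠ k in atTop,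
        ((N k : ℝ))⁻¹ • ((⇑f)^[N k] (y k) - y k) =
        ((s k : ℝ) / (N k : ℝ)) • (((s k : ℝ))⁻¹ • ((⇑g)^[s k] (y k) - y k))
        + ((N k : ℝ))⁻¹ • ((⇑g)^[m (N k)] (y k) - (⇑g)^[s k] (y k))
        + ((N k : ℝ))⁻¹ • V (N k)
        + ((N k : ℝ))⁻¹ • ((⇑f)^[N k] (y k) - (⇑g)^[m (N k)] (y k) - V (N k)) := by
      filter_upwards [hev] with k hk
      have hsk0 : ((s k : ℕ) : ℝ) ≠ 0 := by
        have : (0:ℝ) < (s k : ℝ) := by exact_mod_cast hk.1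
        linarith
      have hNk0 : ((N k : ℕ) : ℝ) ≠ 0 := by
        have : (0:ℝ) < (N k : ℝ) := by exact_mod_cast hk.2
        linarith
      have h1 : ((s k : ℝ) / (N k : ℝ)) • (((s k : ℝ))⁻¹ • ((⇑g)^[s k] (y k) - y k))
          = ((N k : ℝ))⁻¹ • ((⇑g)^[s k] (y k) - y k) := by
        rw [smul_smul]
        congr 1
        field_simp
      rw [h1, ← smul_add, ← smul_add, ← smul_add]
      congr 1
      abel
    -- limits of the four summands
    have hL1 : Tendsto (fun k => ((s k : ℝ) / (N k : ℝ)) •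
        (((s k : ℝ))⁻¹ • ((⇑g)^[s k] (y k) - y k))) atTop (𝓝 (lam • u)) :=
      hT1.smul hu
    have hL2 : Tendsto (fun k =>
        ((N k : ℝ))⁻¹ • ((⇑g)^[m (N k)] (y k) - (⇑g)^[s k] (y k))) atTop (𝓝 0) := by
      apply squeeze_zero_norm'
        (a := fun k => (|(m (N k) : ℝ) / (N k : ℝ) - lam| + |lam - (s k : ℝ) / (N k : ℝ)|) * Mg) ?_ ?_
      · filter_upwards [hev] with k hk
        have hNk0 : (0 : ℝ) < (N k : ℝ) := by exact_mod_cast hk.2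
        rw [norm_smul, norm_inv, Real.norm_natCast]
        have hgap := iterate_gap_bound hMg (s k) (m (N k)) (y k)
        calc ((N k : ℝ))⁻¹ * ‖(⇑g)^[m (N k)] (y k) - (⇑g)^[s k] (y k)‖
            ≤ ((N k : ℝ))⁻¹ * (|(m (N k) : ℝ) - (s k : ℝ)| * Mg) := by
              apply mul_le_mul_of_nonneg_left hgap (by positivity)
        _ = |(m (N k) : ℝ) / (N k : ℝ) - (s k : ℝ) / (N k : ℝ)| * Mg := by
              rw [← sub_div, abs_div, abs_of_pos hNk0]; ring
        _ ≤ (|(m (N k) : ℝ) / (N k : ℝ) - lam| + |lam - (s k : ℝ) / (N k : ℝ)|) * Mg := by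
              apply mul_le_mul_of_nonneg_right (abs_sub_le _ lam _) hMg0
      · have hA : Tendsto (fun k => |(m (N k) : ℝ) / (N k : ℝ) - lam|) atTop (𝓝 0) := by
          have := (hm.comp hN).sub_const lam
          simpa using this.abs
        have hB : Tendsto (fun k => |lam - (s k : ℝ) / (N k : ℝ)|) atTop (𝓝 0) := by
          have := (tendsto_const_nhds (x := lam) (f := atTop)).sub hT1
          simpa using this.abs
        have := (hA.add hB).mul_const Mg
        simpa using this
    have hL3 : Tendsto (fun k => ((N k : ℝ))⁻¹ • V (N k)) atTop (𝓝 w) := hw.comp hN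
    have hL4 : Tendsto (fun k =>
        ((N k : ℝ))⁻¹ • ((⇑f)^[N k] (y k) - (⇑g)^[m (N k)] (y k) - V (N k))) atTop (𝓝 0) := by
      apply squeeze_zero_norm' (a := fun k => D / (N k : ℝ)) ?_
        ((tendsto_const_div_atTop_nhds_zero_nat D).comp hN)
      filter_upwards [hev] with k hk
      rw [norm_smul, norm_inv, Real.norm_natCast]
      have hNk0 : (0 : ℝ) < (N k : ℝ) := by exact_mod_cast hk.2
      calc ((N k : ℝ))⁻¹ * ‖(⇑f)^[N k] (y k) - (⇑g)^[m (N k)] (y k) - V (N k)‖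
          ≤ ((N k : ℝ))⁻¹ * D := by
            apply mul_le_mul_of_nonneg_left (hvV (N k) (y k)) (by positivity)
      _ = D / (N k : ℝ) := by ring
    have hcomb := ((hL1.add hL2).add hL3).add hL4
    have : Tendsto (fun k => ((N k : ℝ))⁻¹ • ((⇑f)^[N k] (y k) - y k)) atTop
        (𝓝 (lam • u + w)) := by
      apply Tendsto.congr' (Filter.EventuallyEq.symm hdecomp)
      simpa using hcomb
    exact this
  · -- Rot f + (-w) ⊆ lam • Rot g
    rintro _ ⟨vv, ⟨x, t, ht, hconv⟩, rfl⟩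
    rw [Set.mem_smul_set]
    refine ⟨lam⁻¹ • (vv + -w), ⟨x, fun k => m (t k), hmtop.comp ht, ?_⟩, ?_⟩
    · have hev : ∀ᶠ k in atTop, 1 ≤ t k ∧ 1 ≤ m (t k) := by
        filter_upwards [ht.eventually (eventually_ge_atTop 1),
          (hmtop.comp ht).eventually (eventually_ge_atTop 1)] with k h1 h2
        exact ⟨h1, h2⟩
      have hdecomp : ∀ᶠ k in atTop,
          ((m (t k) : ℝ))⁻¹ • ((⇑g)^[m (t k)] (x k) - x k) =
          (((m (t k) : ℝ)) / (t k : ℝ))⁻¹ •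
            (((t k : ℝ))⁻¹ • ((⇑f)^[t k] (x k) - x k)
            + -(((t k : ℝ))⁻¹ • V (t k))
            + -(((t k : ℝ))⁻¹ • ((⇑f)^[t k] (x k) - (⇑g)^[m (t k)] (x k) - V (t k)))) := by
        filter_upwards [hev] with k hk
        have htk0 : ((t k : ℕ) : ℝ) ≠ 0 := by
          have : (0:ℝ) < (t k : ℝ) := by exact_mod_cast hk.1
          linarith
        have hmk0 : ((m (t k) : ℕ) : ℝ) ≠ 0 := by
          have : (0:ℝ) < (m (t k) : ℝ) := by exact_mod_cast hk.2
          linarith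
        have h3 : ((t k : ℝ))⁻¹ • ((⇑f)^[t k] (x k) - x k)
            + -(((t k : ℝ))⁻¹ • V (t k))
            + -(((t k : ℝ))⁻¹ • ((⇑f)^[t k] (x k) - (⇑g)^[m (t k)] (x k) - V (t k)))
            = ((t k : ℝ))⁻¹ • ((⇑g)^[m (t k)] (x k) - x k) := by
          rw [← smul_neg, ← smul_neg, ← smul_add, ← smul_add]
          congr 1
          abel
        rw [h3, smul_smul]
        congr 1
        field_simp
      have hscal : Tendsto (fun k => (((m (t k) : ℝ)) / (t k : ℝ))⁻¹) atTop (𝓝 lam⁻¹) :=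
        (hm.comp ht).inv₀ (ne_of_gt hlam)
      have hE : Tendsto (fun k =>
          ((t k : ℝ))⁻¹ • ((⇑f)^[t k] (x k) - (⇑g)^[m (t k)] (x k) - V (t k))) atTop
          (𝓝 0) := by
        apply squeeze_zero_norm' (a := fun k => D / (t k : ℝ)) ?_
          ((tendsto_const_div_atTop_nhds_zero_nat D).comp ht)
        filter_upwards [hev] with k hk
        rw [norm_smul, norm_inv, Real.norm_natCast]
        calc ((t k : ℝ))⁻¹ * ‖(⇑f)^[t k] (x k) - (⇑g)^[m (t k)] (x k) - V (t k)‖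
            ≤ ((t k : ℝ))⁻¹ * D := by
              apply mul_le_mul_of_nonneg_left (hvV (t k) (x k)) (by positivity)
        _ = D / (t k : ℝ) := by ring
      have hbr : Tendsto (fun k =>
          ((t k : ℝ))⁻¹ • ((⇑f)^[t k] (x k) - x k)
          + -(((t k : ℝ))⁻¹ • V (t k))
          + -(((t k : ℝ))⁻¹ • ((⇑f)^[t k] (x k) - (⇑g)^[m (t k)] (x k) - V (t k)))) atTop
          (𝓝 (vv + -w)) := by
        have := (hconv.add (hw.comp ht).neg).add hE.neg
        simpa using this
      have := hscal.smul hbr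
      exact Tendsto.congr' (Filter.EventuallyEq.symm hdecomp) this
    · show lam • (lam⁻¹ • (vv + -w)) = vv + -w
      rw [smul_inv_smul₀ (ne_of_gt hlam)]
end

section
/- If each of two compact subsets C, C' of ℝ² has some translate contained in the other (there exist u, v ∈ ℝ² with C + u ⊆ C' and C' + v ⊆ C), and C, C' are nonempty convex compact sets, then some translate of C' equals C. -/
lemma shift_zero {K : Set (ℝ × ℝ)} (hK : K.Nonempty) (hKc : IsCompact K)
    (a : ℝ × ℝ) (h : ∀ x ∈ K, x + a ∈ K) : a = 0 := by
  obtain ⟨x0, hx0⟩ := hK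
  have hiter : ∀ n : ℕ, x0 + n • a ∈ K := by
    intro n
    induction n with
    | zero => simpa using hx0
    | succ n ih =>
      have := h _ ih
      simpa [succ_nsmul, add_mul, add_assoc] using this
  obtain ⟨R, hR⟩ := hKc.isBounded.exists_norm_le
  by_contra ha
  have hapos : 0 < ‖a‖ := norm_pos_iff.mpr ha
  obtain ⟨n, hn⟩ := exists_nat_gt ((R + ‖x0‖) / ‖a‖)
  have h1 : R + ‖x0‖ < n * ‖a‖ := (div_lt_iff₀ hapos).mp hn
  have h4 : ‖x0 + (n:ℝ) • a‖ ≤ R := by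
    rw [Nat.cast_smul_eq_nsmul]; exact hR _ (hiter n)
  have h5 : ‖(n:ℝ) • a‖ ≤ ‖x0 + (n:ℝ) • a‖ + ‖x0‖ := by
    have := norm_add_le (x0 + (n:ℝ) • a) (-x0)
    simpa [add_assoc] using this
  have h6 : ‖(n:ℝ) • a‖ = n * ‖a‖ := by
    rw [norm_smul]; simp
  linarith

/-- If each of two nonempty compact convex subsets of `ℝ²` has a translate contained
in the other, then some translate of `C'` equals `C`. -/
theorem stmt18 (C C' : Set (ℝ × ℝ)) (hC : C.Nonempty) (hC' : C'.Nonempty)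
    (hCc : IsCompact C) (hCc' : IsCompact C')
    (hCv : Convex ℝ C) (hCv' : Convex ℝ C')
    (u v : ℝ × ℝ)
    (hu : (fun x => x + u) '' C ⊆ C') (hv : (fun x => x + v) '' C' ⊆ C) :
    ∃ w : ℝ × ℝ, (fun x => x + w) '' C' = C := by
  have hsum : u + v = 0 := by
    apply shift_zero hC hCc
    intro x hx
    have h1 : x + u ∈ C' := hu ⟨x, hx, rfl⟩
    have h2 : x + u + v ∈ C := hv ⟨x + u, h1, rfl⟩
    simpa [add_assoc] using h2
  refine ⟨v, Set.Subset.antisymm (fun y hy => ?_) (fun x hx => ?_)⟩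
  · obtain ⟨x', hx', rfl⟩ := hy
    exact hv ⟨x', hx', rfl⟩
  · refine ⟨x + u, hu ⟨x, hx, rfl⟩, ?_⟩
    simp [add_assoc, hsum]
end
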